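/- If F is an S-strongly flat R-module, then the localization F_S = F ⊗_R R_S is a projective R_S-module. -/

import Mathlib

/-!
`F_S` is a quotient `q : P → F_S` of a free `R_S`-module, and `K = ker q` is an `R_S`-module.
Every `R_S`-module `K` is `S`-weakly cotorsion: in an extension `0 → K → E → R_S → 0` each
`s ∈ S` acts invertibly on `E` (five lemma), so the universal property of `R_S` splits it.
Hence `Ext¹_R(F, K) = 0`, and the localization map `F → F_S` lifts through `q`. By the universal
property of `F_S` the lift extends to a section of `q`, which is automatically `R_S`-linear, so
`F_S` is a direct summand of `P`.
-/

open CategoryTheory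

noncomputable def ext1Zero (R : Type) [CommRing R] (M N : Type) [AddCommGroup M] [Module R M]
    [AddCommGroup N] [Module R N] : Prop :=
  Subsingleton (((Ext R (ModuleCat R) 1).obj (Opposite.op (ModuleCat.of R M))).obj
    (ModuleCat.of R N))

/-- An `R`-module `C` is `S`-weakly cotorsion if `Ext¹_R(R_S, C) = 0`. -/
noncomputable def SWeaklyCotorsion (R : Type) [CommRing R] (S : Submonoid R) (C : Type)
    [AddCommGroup C] [Module R C] : Prop :=
  ext1Zero R (Localization S) C

/-- An `R`-module `F` is `S`-strongly flat if `Ext¹_R(F, C) = 0` for every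
`S`-weakly cotorsion `R`-module `C`. -/
noncomputable def SStronglyFlat (R : Type) [CommRing R] (S : Submonoid R) (F : Type)
    [AddCommGroup F] [Module R F] : Prop :=
  ∀ (C : Type) [AddCommGroup C] [Module R C], SWeaklyCotorsion R S C → ext1Zero R F C

namespace CategoryTheory

variable {R : Type} [CommRing R]

lemma ProjectiveResolution.subsingleton_ext_one_iff {X Y : ModuleCat R}
    (P : ProjectiveResolution X) :
    Subsingleton (((Ext R (ModuleCat R) 1).obj (Opposite.op X)).obj Y) ↔
      ∀ f : P.complex.X 1 ⟶ Y, P.complex.d 2 1 ≫ f = 0 →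
        ∃ g : P.complex.X 0 ⟶ Y, P.complex.d 1 0 ≫ g = f := by
  rw [← ModuleCat.isZero_iff_subsingleton, (P.isoExt 1 Y).isZero_iff,
    ← HomologicalComplex.exactAt_iff_isZero_homology,
    HomologicalComplex.exactAt_iff' _ 0 1 2 (by simp) (by simp),
    ShortComplex.moduleCat_exact_iff]
  rfl

lemma ShortComplex.ShortExact.exists_lift_of_subsingleton_ext_one
    {T : ShortComplex (ModuleCat R)} (hT : T.ShortExact) {X : ModuleCat R}
    (hX : Subsingleton (((Ext R (ModuleCat R) 1).obj (Opposite.op X)).obj T.X₁))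
    (ι : X ⟶ T.X₃) : ∃ φ : X ⟶ T.X₂, φ ≫ T.g = ι := by
  have := hT.mono_f
  have := hT.epi_g
  let P := projectiveResolution X
  let π₀ : P.complex.X 0 ⟶ X := P.π.f 0
  have : Epi π₀ := inferInstanceAs (Epi (P.π.f 0))
  have hdπ : P.complex.d 1 0 ≫ π₀ = 0 := P.complex_d_comp_π_f_zero
  let p : P.complex.X 0 ⟶ T.X₂ := Projective.factorThru (π₀ ≫ ι) T.g
  have hp : p ≫ T.g = π₀ ≫ ι := Projective.factorThru_comp _ _
  let κ : P.complex.X 1 ⟶ T.X₁ := hT.exact.lift (P.complex.d 1 0 ≫ p) (by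
    rw [Category.assoc, hp, reassoc_of% hdπ, Limits.zero_comp])
  have hκ : P.complex.d 1 0 ≫ p = κ ≫ T.f := (hT.exact.lift_f _ _).symm
  -- the cocycle `κ` is a coboundary `d ≫ g`; then `p - g ≫ T.f` kills `im d`, so descends to `X`
  obtain ⟨g, hg⟩ := P.subsingleton_ext_one_iff.1 hX κ <| by
    rw [← cancel_mono T.f, Category.assoc, ← hκ, HomologicalComplex.d_comp_d_assoc,
      Limits.zero_comp, Limits.zero_comp]
  let φ : X ⟶ T.X₂ := P.exact₀.desc (p - g ≫ T.f) (by simp [hκ, ← hg])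
  have hφ : π₀ ≫ φ = p - g ≫ T.f := P.exact₀.g_desc _ _
  refine ⟨φ, ?_⟩
  rw [← cancel_epi π₀, reassoc_of% hφ]
  simp [hp]

end CategoryTheory

section

variable {R : Type} [CommRing R]

section Pushout

variable {P₁ P₀ X Y : Type} [AddCommGroup P₁] [Module R P₁] [AddCommGroup P₀] [Module R P₀]
  [AddCommGroup X] [Module R X] [AddCommGroup Y] [Module R Y]

lemma exists_pushout_extension {d : P₁ →ₗ[R] P₀} {π : P₀ →ₗ[R] X} (f : P₁ →ₗ[R] Y)
    (hdπ : Function.Exact d π) (hπ : Function.Surjective π)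
    (hf : LinearMap.ker d ≤ LinearMap.ker f) :
    ∃ (E : Type) (_ : AddCommGroup E) (_ : Module R E) (j : Y →ₗ[R] E) (ρ : E →ₗ[R] X)
      (c : P₀ →ₗ[R] E), Function.Injective j ∧ Function.Exact j ρ ∧ Function.Surjective ρ ∧
        c ∘ₗ d = j ∘ₗ f := by
  let W := LinearMap.range (d.prod (-f))
  let j : Y →ₗ[R] (P₀ × Y) ⧸ W := W.mkQ ∘ₗ LinearMap.inr R P₀ Y
  let c : P₀ →ₗ[R] (P₀ × Y) ⧸ W := W.mkQ ∘ₗ LinearMap.inl R P₀ Y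
  let ρ : (P₀ × Y) ⧸ W →ₗ[R] X := W.liftQ (π ∘ₗ LinearMap.fst R P₀ Y) <| by
    rintro _ ⟨z, rfl⟩
    simp [hdπ.apply_apply_eq_zero]
  have hmk : ∀ x y, W.mkQ (x, y) = c x + j y := fun x y => by
    rw [LinearMap.comp_apply, LinearMap.comp_apply, ← map_add, LinearMap.inl_apply,
      LinearMap.inr_apply, Prod.mk_add_mk, add_zero, zero_add]
  have hcd : c ∘ₗ d = j ∘ₗ f := by
    ext z
    change c (d z) = j (f z)
    rw [← sub_eq_zero, sub_eq_add_neg, ← map_neg, ← hmk, Submodule.mkQ_apply,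
      Submodule.Quotient.mk_eq_zero]
    exact ⟨z, rfl⟩
  refine ⟨_, _, _, j, ρ, c, ?_, ?_, fun x => ?_, hcd⟩
  · rw [← LinearMap.ker_eq_bot, eq_bot_iff]
    intro y hy
    obtain ⟨z, hz⟩ := (Submodule.Quotient.mk_eq_zero W).1 hy
    obtain ⟨hdz, hfz⟩ := Prod.ext_iff.1 hz
    change d z = 0 at hdz
    change -f z = y at hfz
    rw [Submodule.mem_bot, ← hfz, LinearMap.mem_ker.1 (hf hdz), neg_zero]
  · intro e
    obtain ⟨⟨x, y⟩, rfl⟩ := W.mkQ_surjective e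
    constructor
    · intro hx
      obtain ⟨z, rfl⟩ := (hdπ x).1 hx
      exact ⟨f z + y, by rw [hmk, ← LinearMap.comp_apply c, hcd]; simp⟩
    · rintro ⟨y', hy'⟩
      rw [← hy']
      simp [ρ, j]
  · obtain ⟨x, rfl⟩ := hπ x
    exact ⟨c x, rfl⟩

end Pushout

lemma ext1Zero_of_forall_retraction {X Y : Type} [AddCommGroup X] [Module R X]
    [AddCommGroup Y] [Module R Y]
    (h : ∀ (E : Type) [AddCommGroup E] [Module R E] (j : Y →ₗ[R] E) (ρ : E →ₗ[R] X),
      Function.Injective j → Function.Exact j ρ → Function.Surjective ρ →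
        ∃ r : E →ₗ[R] Y, r ∘ₗ j = LinearMap.id) :
    ext1Zero R X Y := by
  let P := projectiveResolution (ModuleCat.of R X)
  refine P.subsingleton_ext_one_iff.2 fun f hf => ?_
  have hexact₀ : Function.Exact (P.complex.d 1 0) (P.π.f 0) :=
    (ShortComplex.ShortExact.moduleCat_exact_iff_function_exact _).1 P.exact₀
  have hker : LinearMap.ker (P.complex.d 1 0).hom ≤ LinearMap.ker f.hom := by
    intro z hz
    obtain ⟨w, rfl⟩ := (ShortComplex.moduleCat_exact_iff _).1 (P.exact_succ 0) z hz
    exact congr($hf w)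
  obtain ⟨E, _, _, j, ρ, c, hj, hjρ, hρ, hcd⟩ :=
    exists_pushout_extension f.hom hexact₀
      ((ModuleCat.epi_iff_surjective _).1 inferInstance) hker
  obtain ⟨r, hr⟩ := h E j ρ hj hjρ hρ
  -- the cocycle `f` is the coboundary of `r ∘ c`, since `c ∘ d = j ∘ f` and `r ∘ j = id`
  refine ⟨ModuleCat.ofHom (r ∘ₗ c), ?_⟩
  ext z
  exact congr(r $(LinearMap.congr_fun hcd z)).trans (LinearMap.congr_fun hr (f z))

lemma Function.Exact.isUnit_algebraMap_end {K E N : Type} [AddCommGroup K] [Module R K]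
    [AddCommGroup E] [Module R E] [AddCommGroup N] [Module R N]
    {j : K →ₗ[R] E} {ρ : E →ₗ[R] N} (hjρ : Function.Exact j ρ) (hj : Function.Injective j)
    (hρ : Function.Surjective ρ) {r : R} (hK : IsUnit (algebraMap R (Module.End R K) r))
    (hN : IsUnit (algebraMap R (Module.End R N) r)) :
    IsUnit (algebraMap R (Module.End R E) r) := by
  rw [Module.End.isUnit_iff] at hK hN ⊢
  exact LinearMap.bijective_of_surjective_of_bijective_of_bijective_of_injective
    (0 : Unit →ₗ[R] K) j ρ (0 : N →ₗ[R] Unit) 0 j ρ 0 (0 : Unit →ₗ[R] Unit) _ _ _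
    (0 : Unit →ₗ[R] Unit) (by simp) (by ext; simp) (by ext; simp) (by simp)
    ((LinearMap.exact_zero_iff_injective _ _).2 hj) hjρ
    ((LinearMap.exact_zero_iff_surjective _ _).2 hρ)
    ((LinearMap.exact_zero_iff_injective _ _).2 hj) hjρ
    ((LinearMap.exact_zero_iff_surjective _ _).2 hρ)
    (fun _ => ⟨0, Subsingleton.elim _ _⟩) hK hN (fun _ _ _ => Subsingleton.elim _ _)

lemma exists_rightInverse_of_isLocalization (S : Submonoid R) {A E : Type} [CommRing A]
    [Algebra R A] [IsLocalization S A] [AddCommGroup E] [Module R E]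
    (hE : ∀ s : S, IsUnit (algebraMap R (Module.End R E) s))
    {ρ : E →ₗ[R] A} (hρ : Function.Surjective ρ) :
    ∃ σ : A →ₗ[R] E, ρ ∘ₗ σ = LinearMap.id := by
  obtain ⟨e, he⟩ := hρ 1
  refine ⟨IsLocalizedModule.lift S (Algebra.linearMap R A) (LinearMap.toSpanSingleton R E e) hE,
    IsLocalizedModule.linearMap_ext S (Algebra.linearMap R A) (Algebra.linearMap R A) ?_⟩
  ext
  rw [LinearMap.comp_apply, LinearMap.comp_apply, IsLocalizedModule.lift_apply,
    LinearMap.toSpanSingleton_apply, one_smul, he, LinearMap.comp_apply, LinearMap.id_apply,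
    Algebra.linearMap_apply, map_one]

lemma exists_section_of_isLocalizedModule (S : Submonoid R) {A F M P : Type} [CommRing A]
    [Algebra R A] [IsLocalization S A] [AddCommGroup F] [Module R F]
    [AddCommGroup M] [Module R M] [Module A M] [IsScalarTower R A M]
    [AddCommGroup P] [Module R P] [Module A P] [IsScalarTower R A P]
    (ι : F →ₗ[R] M) [IsLocalizedModule S ι] (q : P →ₗ[A] M) (φ : F →ₗ[R] P)
    (hφ : q.restrictScalars R ∘ₗ φ = ι) :
    ∃ σ : M →ₗ[A] P, q ∘ₗ σ = LinearMap.id := by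
  let σ : M →ₗ[R] P :=
    IsLocalizedModule.lift S ι φ (isLocalizedModule_id S P A).map_units
  refine ⟨σ.extendScalarsOfIsLocalization S A, LinearMap.restrictScalars_injective R ?_⟩
  refine IsLocalizedModule.linearMap_ext S ι ι ?_
  ext x
  change q (σ (ι x)) = ι x
  rw [IsLocalizedModule.lift_apply]
  exact LinearMap.congr_fun hφ x

theorem SWeaklyCotorsion.of_isScalarTower (S : Submonoid R) (K : Type) [AddCommGroup K]
    [Module R K] [Module (Localization S) K] [IsScalarTower R (Localization S) K] :
    SWeaklyCotorsion R S K := by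
  refine ext1Zero_of_forall_retraction fun E _ _ j ρ hj hjρ hρ => ?_
  have hE (s : S) : IsUnit (algebraMap R (Module.End R E) s) :=
    hjρ.isUnit_algebraMap_end hj hρ ((isLocalizedModule_id S K (Localization S)).map_units s)
      ((isLocalizedModule_id S (Localization S) (Localization S)).map_units s)
  exact ((hjρ.split_tfae hj hρ).out 0 1).1 (exists_rightInverse_of_isLocalization S hE hρ)

end

theorem stmt_7 (R : Type) [CommRing R] (S : Submonoid R)
    (F : Type) [AddCommGroup F] [Module R F] (hF : SStronglyFlat R S F) :
    Module.Projective (Localization S) (LocalizedModule S F) := by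
  let q := Finsupp.linearCombination (Localization S) (id : LocalizedModule S F → _)
  have hq : Function.Surjective q :=
    Finsupp.linearCombination_surjective _ Function.surjective_id
  let T := ModuleCat.shortComplexOfCompEqZero (M := LinearMap.ker q)
    ((LinearMap.ker q).subtype.restrictScalars R) (q.restrictScalars R) (by ext; simp)
  have hT : T.ShortExact := ModuleCat.shortComplex_shortExact T
    (LinearMap.exact_subtype_ker_map q) (LinearMap.ker q).injective_subtype hq
  obtain ⟨φ, hφ⟩ := hT.exists_lift_of_subsingleton_ext_one
    (hF _ (SWeaklyCotorsion.of_isScalarTower S _))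
    (ModuleCat.ofHom (LocalizedModule.mkLinearMap S F))
  obtain ⟨σ, hσ⟩ := exists_section_of_isLocalizedModule S
    (LocalizedModule.mkLinearMap S F) q φ.hom congr(($hφ).hom)
  exact (Module.Projective.iff_split_of_projective q hq).2 ⟨σ, hσ⟩
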